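/- Let X be a compact metric space and f : X → X a continuous map. Let U be a trapping region and A = Inv(U) the associated attractor. Then Inv⁺(X \ U) = {x ∈ X : ω(x) ∩ A = ∅}; in particular Inv⁺(X \ U) is compact, forward invariant, and backward invariant, and it depends only on A and not on the choice of trapping region U with A = Inv(U). Moreover, if f is surjective, then f(Inv⁺(X \ U)) = Inv⁺(X \ U). -/

import Mathlib

open Set

/-- The maximal invariant set in `U`: the union of all subsets `S ⊆ U` with `f '' S = S`. -/
def MaxInv {Y : Type*} (f : Y → Y) (U : Set Y) : Set Y :=
  ⋃₀ {S : Set Y | S ⊆ U ∧ f '' S = S}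

/-- The maximal forward invariant set in `U`: the union of all subsets `S ⊆ U`
with `f '' S ⊆ S`. -/
def MaxInvPlus {Y : Type*} (f : Y → Y) (U : Set Y) : Set Y :=
  ⋃₀ {S : Set Y | S ⊆ U ∧ f '' S ⊆ S}

/-- The omega-limit set `ω(U) = ⋂_{n ≥ 0} cl (⋃_{m ≥ n} f^[m] '' U)`. -/
def OmegaLim {Y : Type*} [TopologicalSpace Y] (f : Y → Y) (U : Set Y) : Set Y :=
  ⋂ n : ℕ, closure (⋃ m ≥ n, f^[m] '' U)

/-- The alpha-limit set `α(U) = ⋂_{n ≥ 0} cl (⋃_{m ≥ n} (f^[m]) ⁻¹' U)`. -/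
def AlphaLim {Y : Type*} [TopologicalSpace Y] (f : Y → Y) (U : Set Y) : Set Y :=
  ⋂ n : ℕ, closure (⋃ m ≥ n, f^[m] ⁻¹' U)

/-- A trapping region: a forward invariant set `U` with `f^[n] '' cl U ⊆ int U`
for some `n ≥ 1`. -/
def IsTrappingRegion {Y : Type*} [TopologicalSpace Y] (f : Y → Y) (U : Set Y) : Prop :=
  f '' U ⊆ U ∧ ∃ n : ℕ, 1 ≤ n ∧ f^[n] '' closure U ⊆ interior U

/-- An attractor: `A = Inv(U)` for some trapping region `U`. -/
def IsAttractor {Y : Type*} [TopologicalSpace Y] (f : Y → Y) (A : Set Y) : Prop :=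
  ∃ U : Set Y, IsTrappingRegion f U ∧ A = MaxInv f U

/-- An attracting neighborhood: `ω(U) ⊆ int U`. -/
def IsAttractingNbhd {Y : Type*} [TopologicalSpace Y] (f : Y → Y) (U : Set Y) : Prop :=
  OmegaLim f U ⊆ interior U

/-- A repelling region: a backward invariant set `U` with `(f^[n]) ⁻¹' cl U ⊆ int U`
for some `n ≥ 1`. -/
def IsRepellingRegion {Y : Type*} [TopologicalSpace Y] (f : Y → Y) (U : Set Y) : Prop :=
  f ⁻¹' U ⊆ U ∧ ∃ n : ℕ, 1 ≤ n ∧ f^[n] ⁻¹' closure U ⊆ interior U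

/-- A repeller: `R = Inv⁺(U)` for some repelling region `U`. -/
def IsRepeller {Y : Type*} [TopologicalSpace Y] (f : Y → Y) (R : Set Y) : Prop :=
  ∃ U : Set Y, IsRepellingRegion f U ∧ R = MaxInvPlus f U

/-- A repelling neighborhood: `α(U) ⊆ int U`. -/
def IsRepellingNbhd {Y : Type*} [TopologicalSpace Y] (f : Y → Y) (U : Set Y) : Prop :=
  AlphaLim f U ⊆ interior U

/-- A backward orbit: a sequence `γ : ℕ → Y` with `f (γ (k+1)) = γ k` for all `k`.
A backward orbit through `x` additionally satisfies `γ 0 = x`. -/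
def IsBackwardOrbit {Y : Type*} (f : Y → Y) (γ : ℕ → Y) : Prop :=
  ∀ k : ℕ, f (γ (k + 1)) = γ k

/-- The orbital alpha-limit set `α_o(γ) = ⋂_{n ≥ 0} cl {γ m : m ≥ n}`. -/
def OrbAlpha {Y : Type*} [TopologicalSpace Y] (γ : ℕ → Y) : Set Y :=
  ⋂ n : ℕ, closure (γ '' {m : ℕ | n ≤ m})

/-- The dual repeller of an attractor `A`: `A* = {x : ω(x) ∩ A = ∅}`. -/
def DualRepeller {Y : Type*} [TopologicalSpace Y] (f : Y → Y) (A : Set Y) : Set Y :=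
  {x : Y | OmegaLim f {x} ∩ A = ∅}

/-- The dual attractor of a repeller `R`:
`R* = {x : ∃ backward orbit γ through x with α_o(γ) ∩ R = ∅}`. -/
def DualAttractor {Y : Type*} [TopologicalSpace Y] (f : Y → Y) (R : Set Y) : Set Y :=
  {x : Y | ∃ γ : ℕ → Y, γ 0 = x ∧ IsBackwardOrbit f γ ∧ OrbAlpha γ ∩ R = ∅}

/-!
A point lies in `Inv⁺(X \ U)` iff its forward orbit never meets `U`. If the orbit of `x` never
meets `U`, then `ω(x)` lies in the closed set `X \ int U`, while
`A = f^[N] A ⊆ f^[N] (cl U) ⊆ int U`. If instead `f^[k] x ∈ U`, the orbit stays in `U` from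
time `k` on, so `ω(x) ⊆ cl U`; as `ω(x)` is invariant, `ω(x) = f^[N] ω(x) ⊆ int U`, so the
nonempty set `ω(x)` is an invariant subset of `U` and hence meets `A`. Compactness: by the
trapping property an orbit meets `U` iff it meets the open set `int U`, so
`Inv⁺(X \ U) = ⋂ₙ (f^[n])⁻¹ (X \ int U)` is closed.
-/

open Function

section MaximalInvariantSets

variable {Y : Type*} {f : Y → Y}

theorem mem_maxInvPlus_iff {V : Set Y} {x : Y} : x ∈ MaxInvPlus f V ↔ ∀ n, f^[n] x ∈ V := by
  constructor
  · rintro ⟨S, ⟨hSV, hfS⟩, hxS⟩ n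
    exact hSV ((mapsTo_iff_image_subset.2 hfS).iterate n hxS)
  · intro h
    refine ⟨{y | ∀ n, f^[n] y ∈ V}, ⟨fun y hy => hy 0, ?_⟩, h⟩
    rintro _ ⟨y, hy, rfl⟩ n
    simpa only [← iterate_succ_apply] using hy (n + 1)

theorem image_maxInvPlus_subset (V : Set Y) : f '' MaxInvPlus f V ⊆ MaxInvPlus f V := by
  rintro _ ⟨x, ⟨S, hS, hx⟩, rfl⟩
  exact ⟨S, hS, hS.2 (mem_image_of_mem f hx)⟩

theorem preimage_maxInvPlus_subset {V : Set Y} (hV : f ⁻¹' V ⊆ V) :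
    f ⁻¹' MaxInvPlus f V ⊆ MaxInvPlus f V := by
  intro x hx
  rw [mem_preimage, mem_maxInvPlus_iff] at hx
  rw [mem_maxInvPlus_iff]
  rintro (_ | n)
  · exact hV (hx 0)
  · exact hx n

theorem maxInv_subset (U : Set Y) : MaxInv f U ⊆ U :=
  sUnion_subset fun _ hS => hS.1

theorem subset_maxInv {U S : Set Y} (hSU : S ⊆ U) (hS : f '' S = S) : S ⊆ MaxInv f U :=
  subset_sUnion_of_mem ⟨hSU, hS⟩

theorem image_maxInv (U : Set Y) : f '' MaxInv f U = MaxInv f U := by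
  refine subset_antisymm ?_ fun x ⟨S, hS, hx⟩ => ?_
  · rintro _ ⟨x, ⟨S, hS, hx⟩, rfl⟩
    exact ⟨S, hS, hS.2 ▸ mem_image_of_mem f hx⟩
  · obtain ⟨y, hy, rfl⟩ := hS.2.symm ▸ hx
    exact mem_image_of_mem f ⟨S, hS, hy⟩

theorem iterate_image_of_image_eq {S : Set Y} (h : f '' S = S) (n : ℕ) : f^[n] '' S = S := by
  rw [image_iterate_eq, iterate_fixed h]

end MaximalInvariantSets

section OrbitTails

variable {Y : Type*} {f : Y → Y}

theorem image_iUnion_ge_iterate_image (s : Set Y) (n : ℕ) :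
    f '' ⋃ m ≥ n, f^[m] '' s = ⋃ m ≥ n + 1, f^[m] '' s := by
  ext y
  simp only [image_iUnion₂, image_image, mem_iUnion, exists_prop, ← iterate_succ_apply' f]
  constructor
  · rintro ⟨m, hm, hy⟩
    exact ⟨m + 1, by omega, hy⟩
  · rintro ⟨_ | m, hm, hy⟩
    · omega
    · exact ⟨m, by omega, hy⟩

theorem antitone_iUnion_ge_iterate_image (s : Set Y) :
    Antitone fun n => ⋃ m ≥ n, f^[m] '' s :=
  fun _ _ hab => iUnion₂_mono' fun m hm => ⟨m, hab.trans hm, subset_rfl⟩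

end OrbitTails

section OmegaLimits

variable {Y : Type*} [TopologicalSpace Y] {f : Y → Y}

theorem omegaLim_subset_closure (s : Set Y) (n : ℕ) :
    OmegaLim f s ⊆ closure (⋃ m ≥ n, f^[m] '' s) :=
  iInter_subset _ n

theorem omegaLim_nonempty [CompactSpace Y] {s : Set Y} (hs : s.Nonempty) :
    (OmegaLim f s).Nonempty := by
  obtain ⟨x, hx⟩ := hs
  refine IsCompact.nonempty_iInter_of_directed_nonempty_isCompact_isClosed _ ?_
    (fun n => ⟨f^[n] x, subset_closure <| mem_iUnion₂.2 ⟨n, le_rfl, x, hx, rfl⟩⟩)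
    (fun _ => isClosed_closure.isCompact) (fun _ => isClosed_closure)
  exact Antitone.directed_ge fun _ _ hab => closure_mono (antitone_iUnion_ge_iterate_image s hab)

/-- Each fibre `f ⁻¹' {y} ∩ K n` is nonempty, so by compactness so is their intersection. -/
theorem image_iInter_eq_of_antitone [CompactSpace Y] [T1Space Y] (hf : Continuous f)
    {K : ℕ → Set Y} (hK : Antitone K) (hKc : ∀ n, IsClosed (K n))
    (himg : ∀ n, f '' K n = K (n + 1)) :
    f '' ⋂ n, K n = ⋂ n, K n := by
  refine subset_antisymm ?_ fun y hy => ?_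
  · rintro _ ⟨x, hx, rfl⟩
    refine mem_iInter.2 fun n => hK n.le_succ ?_
    exact himg n ▸ mem_image_of_mem f (mem_iInter.1 hx n)
  · have hfib : ∀ n, (f ⁻¹' {y} ∩ K n).Nonempty := fun n => by
      obtain ⟨x, hx, hxy⟩ := (himg n).symm ▸ mem_iInter.1 hy (n + 1)
      exact ⟨x, hxy, hx⟩
    have hclosed : ∀ n, IsClosed (f ⁻¹' {y} ∩ K n) := fun n =>
      (isClosed_singleton.preimage hf).inter (hKc n)
    obtain ⟨x, hx⟩ := IsCompact.nonempty_iInter_of_directed_nonempty_isCompact_isClosed _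
      (Antitone.directed_ge fun a b hab => inter_subset_inter_right _ (hK hab)) hfib
      (fun n => (hclosed n).isCompact) hclosed
    exact ⟨x, mem_iInter.2 fun n => (mem_iInter.1 hx n).2, (mem_iInter.1 hx 0).1⟩

theorem image_omegaLim [CompactSpace Y] [T2Space Y] (hf : Continuous f) (s : Set Y) :
    f '' OmegaLim f s = OmegaLim f s := by
  refine image_iInter_eq_of_antitone hf ?_ (fun _ => isClosed_closure) fun n => ?_
  · exact fun _ _ hab => closure_mono (antitone_iUnion_ge_iterate_image s hab)
  · rw [← hf.isClosedMap.closure_image_eq_of_continuous hf, image_iUnion_ge_iterate_image]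

end OmegaLimits

namespace IsTrappingRegion

variable {Y : Type*} [TopologicalSpace Y] {f : Y → Y} {U : Set Y}

theorem maxInv_subset_interior (hU : IsTrappingRegion f U) : MaxInv f U ⊆ interior U := by
  obtain ⟨-, N, -, hN⟩ := hU
  calc MaxInv f U = f^[N] '' MaxInv f U := (iterate_image_of_image_eq (image_maxInv U) N).symm
    _ ⊆ f^[N] '' closure U := image_mono ((maxInv_subset U).trans subset_closure)
    _ ⊆ interior U := hN

/-- An orbit entering `U` reaches `interior U` a fixed number of steps later. -/
theorem maxInvPlus_compl_eq (hU : IsTrappingRegion f U) :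
    MaxInvPlus f Uᶜ = ⋂ n, f^[n] ⁻¹' (interior U)ᶜ := by
  ext x
  simp only [mem_maxInvPlus_iff, mem_iInter, mem_preimage, mem_compl_iff]
  refine ⟨fun h n hn => h n (interior_subset hn), fun h n hn => ?_⟩
  obtain ⟨-, N, -, hN⟩ := hU
  apply h (N + n)
  rw [iterate_add_apply]
  exact hN (mem_image_of_mem _ (subset_closure hn))

theorem isClosed_maxInvPlus_compl (hf : Continuous f) (hU : IsTrappingRegion f U) :
    IsClosed (MaxInvPlus f Uᶜ) := by
  rw [hU.maxInvPlus_compl_eq]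
  exact isClosed_iInter fun n => isOpen_interior.isClosed_compl.preimage (hf.iterate n)

theorem omegaLim_subset_maxInv [CompactSpace Y] [T2Space Y] (hf : Continuous f)
    (hU : IsTrappingRegion f U) {x : Y} {k : ℕ} (hk : f^[k] x ∈ U) :
    OmegaLim f {x} ⊆ MaxInv f U := by
  obtain ⟨hfU, N, -, hN⟩ := hU
  have htail : ⋃ m ≥ k, f^[m] '' {x} ⊆ U := by
    simp only [image_singleton, iUnion_subset_iff, singleton_subset_iff]
    intro m hm
    rw [← Nat.sub_add_cancel hm, iterate_add_apply]
    exact (mapsTo_iff_image_subset.2 hfU).iterate _ hk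
  have hω : OmegaLim f {x} ⊆ U := fun y hy => by
    rw [← iterate_image_of_image_eq (image_omegaLim hf {x}) N] at hy
    obtain ⟨z, hz, rfl⟩ := hy
    have hz' : z ∈ closure U := closure_mono htail (omegaLim_subset_closure {x} k hz)
    exact interior_subset (hN (mem_image_of_mem _ hz'))
  exact subset_maxInv hω (image_omegaLim hf {x})

theorem omegaLim_inter_maxInv_eq_empty (hU : IsTrappingRegion f U) {x : Y}
    (hx : ∀ n, f^[n] x ∉ U) : OmegaLim f {x} ∩ MaxInv f U = ∅ := by
  have hω : OmegaLim f {x} ⊆ (interior U)ᶜ := by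
    refine (omegaLim_subset_closure {x} 0).trans
      (closure_minimal ?_ isOpen_interior.isClosed_compl)
    simp only [image_singleton, iUnion_subset_iff, singleton_subset_iff]
    exact fun m _ hm => hx m (interior_subset hm)
  exact eq_empty_of_forall_notMem fun y ⟨hyω, hyA⟩ => hω hyω (hU.maxInv_subset_interior hyA)

theorem maxInvPlus_compl_eq_dualRepeller [CompactSpace Y] [T2Space Y] (hf : Continuous f)
    (hU : IsTrappingRegion f U) : MaxInvPlus f Uᶜ = DualRepeller f (MaxInv f U) := by
  ext x
  rw [mem_maxInvPlus_iff]
  refine ⟨hU.omegaLim_inter_maxInv_eq_empty, fun hx n hn => ?_⟩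
  obtain ⟨y, hy⟩ := omegaLim_nonempty (f := f) (singleton_nonempty x)
  exact eq_empty_iff_forall_notMem.1 hx y ⟨hy, hU.omegaLim_subset_maxInv hf hn hy⟩

end IsTrappingRegion

/-- Properties of the dual repeller `Inv⁺(X \ U)` of an attractor. -/
theorem dual_repeller_properties
    {X : Type*} [MetricSpace X] [CompactSpace X]
    (f : X → X) (hf : Continuous f) (U A : Set X)
    (hU : IsTrappingRegion f U) (hA : A = MaxInv f U) :
    MaxInvPlus f Uᶜ = DualRepeller f A ∧
    IsCompact (MaxInvPlus f Uᶜ) ∧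
    f '' MaxInvPlus f Uᶜ ⊆ MaxInvPlus f Uᶜ ∧
    f ⁻¹' MaxInvPlus f Uᶜ ⊆ MaxInvPlus f Uᶜ ∧
    (∀ U' : Set X, IsTrappingRegion f U' → A = MaxInv f U' →
      MaxInvPlus f U'ᶜ = MaxInvPlus f Uᶜ) ∧
    (Function.Surjective f → f '' MaxInvPlus f Uᶜ = MaxInvPlus f Uᶜ) := by
  subst hA
  have hdual := hU.maxInvPlus_compl_eq_dualRepeller hf
  have hpre : f ⁻¹' MaxInvPlus f Uᶜ ⊆ MaxInvPlus f Uᶜ :=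
    preimage_maxInvPlus_subset (compl_subset_compl.2 (image_subset_iff.1 hU.1))
  refine ⟨hdual, (hU.isClosed_maxInvPlus_compl hf).isCompact, image_maxInvPlus_subset _, hpre,
    fun U' hU' hA' => by rw [hU'.maxInvPlus_compl_eq_dualRepeller hf, ← hA', hdual],
    fun hsurj => ?_⟩
  exact (image_maxInvPlus_subset _).antisymm
    ((image_preimage_eq _ hsurj).symm.subset.trans (image_mono hpre))
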